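/- arXiv:1510.06827 — 6 statements merged into one kernel-verified Lean document; each statement's English description precedes it below -/
import Mathlib

section
/- Let E_u > 0, τ > 0, γ > 0, α ∈ (0,1], K ≥ 1 an integer, β_1,…,β_K > 0 real, and k ∈ {1,…,K}. For each integer M ≥ 2 set p(M) = E_u / M^γ and define R̃^{a,mrc}(M) = log₂(1 + α² τ p(M)² (M−1) β_k² / (p(M)(1 + τ p(M) β_k)·Σ_{i≠k} β_i + (τ+1) p(M) β_k + 1 + (1−α²) τ p(M)² β_k²)). Then R̃^{a,mrc}(M) − log₂(1 + α² τ E_u² β_k² · M^{1−2γ}) → 0 as M → ∞. -/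
/-!
Under the power scaling `p = E_u / M^γ → 0` the interference-plus-noise denominator tends to `1`,
and the signal term equals `α² τ E_u² β_k² M^(1-2γ) · (1 - 1/M)`. Hence the SINR is `a_M b_M`,
where `b_M = α² τ E_u² β_k² M^(1-2γ) ≥ 0` and `a_M → 1`. Finally `log(1 + a b) - log(1 + b) → 0`
whenever `a → 1` and `b ≥ 0`, because `(1 + a b) / (1 + b) - 1 = (a - 1) · b / (1 + b)` with
`0 ≤ b / (1 + b) ≤ 1`, uniformly in `b`, so the growth rate of `b` plays no role.
-/

open Filter Topology

theorem tendsto_one_add_mul_div_one_add {ι : Type*} {l : Filter ι} {a b : ι → ℝ}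
    (ha : Tendsto a l (𝓝 1)) (hb : ∀ᶠ i in l, 0 ≤ b i) :
    Tendsto (fun i => (1 + a i * b i) / (1 + b i)) l (𝓝 1) := by
  rw [tendsto_iff_norm_sub_tendsto_zero] at ha ⊢
  refine squeeze_zero' (Eventually.of_forall fun _ => norm_nonneg _) ?_ ha
  filter_upwards [hb] with i hbi
  have hsub : (1 + a i * b i) / (1 + b i) - 1 = (a i - 1) * (b i / (1 + b i)) := by
    field_simp
    ring
  rw [hsub, norm_mul]
  refine mul_le_of_le_one_right (norm_nonneg _) ?_
  rw [Real.norm_of_nonneg (by positivity), div_le_one (by positivity)]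
  linarith

theorem tendsto_logb_one_add_mul_sub_logb_one_add {ι : Type*} {l : Filter ι} {a b : ι → ℝ}
    (c : ℝ) (ha : Tendsto a l (𝓝 1)) (hb : ∀ᶠ i in l, 0 ≤ b i) :
    Tendsto (fun i => Real.logb c (1 + a i * b i) - Real.logb c (1 + b i)) l (𝓝 0) := by
  have hlog := (Real.continuousAt_logb (b := c) one_ne_zero).tendsto.comp
    (tendsto_one_add_mul_div_one_add ha hb)
  rw [Real.logb_one] at hlog
  refine hlog.congr' ?_
  filter_upwards [hb, ha.eventually (lt_mem_nhds one_pos)] with i hbi hai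
  exact Real.logb_div (by positivity) (by positivity)

theorem tendsto_interference_plus_noise {ι : Type*} {l : Filter ι} {p : ι → ℝ}
    (hp : Tendsto p l (𝓝 0)) (τ α b S : ℝ) :
    Tendsto (fun i => p i * (1 + τ * p i * b) * S + (τ + 1) * p i * b + 1 +
      (1 - α ^ 2) * τ * p i ^ 2 * b ^ 2) l (𝓝 1) := by
  have hcont : Continuous fun x : ℝ => x * (1 + τ * x * b) * S + (τ + 1) * x * b + 1 +
      (1 - α ^ 2) * τ * x ^ 2 * b ^ 2 := by fun_prop
  simpa [Function.comp_def] using (hcont.tendsto 0).comp hp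

theorem tendsto_one_sub_inv_natCast_div {D : ℕ → ℝ} (hD : Tendsto D atTop (𝓝 1)) :
    Tendsto (fun M : ℕ => (1 - (M : ℝ)⁻¹) / D M) atTop (𝓝 1) := by
  have h := ((tendsto_const_nhds (x := (1 : ℝ))).sub tendsto_inv_atTop_nhds_zero_nat).div hD
    one_ne_zero
  rwa [sub_zero, div_one] at h

theorem rpow_one_sub_two_mul {x : ℝ} (hx : 0 < x) (γ : ℝ) :
    x ^ (1 - 2 * γ) = x / (x ^ γ) ^ 2 := by
  rw [Real.rpow_sub hx, Real.rpow_one, mul_comm 2 γ, Real.rpow_mul hx.le, Real.rpow_ofNat]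

theorem stmt_1_general (Eu τ γ α : ℝ) (hτ : 0 < τ) (hγ : 0 < γ)
    (K : ℕ)
    (β : Fin K → ℝ) (k : Fin K) :
    Filter.Tendsto (fun M : ℕ =>
      Real.logb 2 (1 + α ^ 2 * τ * (Eu / (M : ℝ) ^ γ) ^ 2 * ((M : ℝ) - 1) * (β k) ^ 2 /
          ((Eu / (M : ℝ) ^ γ) * (1 + τ * (Eu / (M : ℝ) ^ γ) * β k) *
              (∑ i ∈ Finset.univ.erase k, β i) +
            (τ + 1) * (Eu / (M : ℝ) ^ γ) * β k + 1 +
            (1 - α ^ 2) * τ * (Eu / (M : ℝ) ^ γ) ^ 2 * (β k) ^ 2)) -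
        Real.logb 2 (1 + α ^ 2 * τ * Eu ^ 2 * (β k) ^ 2 * (M : ℝ) ^ (1 - 2 * γ)))
      Filter.atTop (nhds 0) := by
  have hp : Tendsto (fun M : ℕ => Eu / (M : ℝ) ^ γ) atTop (𝓝 0) :=
    tendsto_const_nhds.div_atTop ((tendsto_rpow_atTop hγ).comp tendsto_natCast_atTop_atTop)
  have ha := tendsto_one_sub_inv_natCast_div
    (tendsto_interference_plus_noise hp τ α (β k) (∑ i ∈ Finset.univ.erase k, β i))
  refine (tendsto_logb_one_add_mul_sub_logb_one_add 2 ha (b := fun M : ℕ =>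
    α ^ 2 * τ * Eu ^ 2 * β k ^ 2 * (M : ℝ) ^ (1 - 2 * γ))
    (Eventually.of_forall fun M => by positivity)).congr' ?_
  filter_upwards [eventually_gt_atTop 0] with M hMpos
  have hM : (0 : ℝ) < M := Nat.cast_pos.mpr hMpos
  have hsignal : (1 - (M : ℝ)⁻¹) * (α ^ 2 * τ * Eu ^ 2 * β k ^ 2 * (M / ((M : ℝ) ^ γ) ^ 2)) =
      α ^ 2 * τ * (Eu / (M : ℝ) ^ γ) ^ 2 * ((M : ℝ) - 1) * β k ^ 2 := by
    field_simp
  rw [rpow_one_sub_two_mul hM, div_mul_eq_mul_div, hsignal]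

theorem stmt_1 (Eu τ γ α : ℝ) (hE : 0 < Eu) (hτ : 0 < τ) (hγ : 0 < γ)
    (hα0 : 0 < α) (hα1 : α ≤ 1) (K : ℕ) (hK : 1 ≤ K)
    (β : Fin K → ℝ) (hβ : ∀ i, 0 < β i) (k : Fin K) :
    Filter.Tendsto (fun M : ℕ =>
      Real.logb 2 (1 + α ^ 2 * τ * (Eu / (M : ℝ) ^ γ) ^ 2 * ((M : ℝ) - 1) * (β k) ^ 2 /
          ((Eu / (M : ℝ) ^ γ) * (1 + τ * (Eu / (M : ℝ) ^ γ) * β k) *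
              (∑ i ∈ Finset.univ.erase k, β i) +
            (τ + 1) * (Eu / (M : ℝ) ^ γ) * β k + 1 +
            (1 - α ^ 2) * τ * (Eu / (M : ℝ) ^ γ) ^ 2 * (β k) ^ 2)) -
        Real.logb 2 (1 + α ^ 2 * τ * Eu ^ 2 * (β k) ^ 2 * (M : ℝ) ^ (1 - 2 * γ)))
      Filter.atTop (nhds 0) :=
  stmt_1_general Eu τ γ α hτ hγ K β k
end

section
/- Let p ∈ ℕ, α ∈ (0,1], τ > 0, E_u > 0, K ≥ 1 an integer, β_1,…,β_K > 0 real, and k ∈ {1,…,K}. Let Δ(p,α) be the (p+1)×(p+1) real matrix with entries α^{|i−j|} (indices 0,…,p) and δ(p,α) = (1, α, …, α^p) ∈ ℝ^{p+1}. For each integer M ≥ 2 set p_u(M) = E_u/√M and, for i ∈ {1,…,K}, c_i(M) = α² β_i² · δ(p,α) (β_i Δ(p,α) + (√M/(τ E_u)) I_{p+1})^{−1} δ(p,α)ᵀ, and define R̃^{p,mrc}(M) = log₂(1 + p_u(M)(M−1) c_k(M) / (p_u(M) Σ_{i≠k} c_i(M) + p_u(M) Σ_{i=1}^K (β_i − c_i(M))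 + 1)). Then R̃^{p,mrc}(M) → log₂(1 + α² (Σ_{j=0}^p α^{2j}) τ E_u² β_k²) as M → ∞. -/
/-!
With s = √M / (τ E_u) one has s • (A + s • 1)⁻¹ = (1 + s⁻¹ • A)⁻¹ → 1 as s → ∞, so
√M · c_i(M) → τ E_u α² β_i² ‖δ‖², i.e. c_i(M) = O(1/√M). Since p_u(M) = E_u/√M → 0, the
interference-plus-noise term of the SINR tends to 1, while its signal term
p_u(M) (M - 1) c_k(M) = E_u (1 - 1/M) √M c_k(M) tends to τ E_u² α² β_k² ‖δ‖², and
‖δ‖² = Σ_{j ≤ p} α^{2j}.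
-/

open Matrix Filter Topology Bornology

namespace Matrix

variable {n 𝕜 : Type*} [Fintype n] [DecidableEq n] [NormedField 𝕜]

theorem continuousAt_inv_one_add_smul (A : Matrix n n 𝕜) :
    ContinuousAt (fun t : 𝕜 => (1 + t • A)⁻¹) 0 := by
  refine ContinuousAt.comp (g := Inv.inv) (continuousAt_matrix_inv _ ?_) (by fun_prop)
  simpa [Ring.inverse_eq_inv'] using continuousAt_inv₀ one_ne_zero

theorem tendsto_smul_inv_add_smul_one (A : Matrix n n 𝕜) :
    Tendsto (fun s : 𝕜 => s • (A + s • 1)⁻¹) (cobounded 𝕜) (𝓝 1) := by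
  have hlim : Tendsto (fun s : 𝕜 => (1 + s⁻¹ • A)⁻¹) (cobounded 𝕜) (𝓝 1) := by
    simpa only [Function.comp_def, zero_smul, add_zero, inv_one] using
      (continuousAt_inv_one_add_smul A).tendsto.comp tendsto_inv₀_cobounded
  have hdet : ∀ᶠ s in cobounded 𝕜, (1 + s⁻¹ • A).det ≠ 0 := by
    have : ContinuousAt (fun t : 𝕜 => (1 + t • A).det) 0 := by fun_prop
    simpa using (this.tendsto.comp tendsto_inv₀_cobounded).eventually_ne (by simp)
  refine hlim.congr' ?_
  filter_upwards [hdet, eventually_ne_cobounded 0] with s hs hs0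
  have : Invertible s := invertibleOfNonzero hs0
  have hfactor : A + s • 1 = s • (1 + s⁻¹ • A) := by
    rw [smul_add, smul_smul, mul_inv_cancel₀ hs0, one_smul, add_comm]
  rw [hfactor, Matrix.inv_smul (A := 1 + s⁻¹ • A) s hs.isUnit, invOf_eq_inv, smul_smul,
    mul_inv_cancel₀ hs0, one_smul]

theorem tendsto_mul_dotProduct_inv_add_smul_one_mulVec (A : Matrix n n 𝕜) (v : n → 𝕜) :
    Tendsto (fun s : 𝕜 => s * (v ⬝ᵥ ((A + s • 1)⁻¹ *ᵥ v))) (cobounded 𝕜) (𝓝 (v ⬝ᵥ v)) := by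
  have hquad : Continuous fun B : Matrix n n 𝕜 => v ⬝ᵥ (B *ᵥ v) := by fun_prop
  have h := (hquad.tendsto 1).comp (tendsto_smul_inv_add_smul_one A)
  simpa only [Function.comp_def, smul_mulVec, dotProduct_smul, smul_eq_mul, one_mulVec] using h

theorem dotProduct_self_pow_eq_sum {R : Type*} [CommSemiring R] (n : ℕ) (a : R) :
    (fun j : Fin n => a ^ (j : ℕ)) ⬝ᵥ (fun j : Fin n => a ^ (j : ℕ)) =
      ∑ j ∈ Finset.range n, a ^ (2 * j) := by
  simp only [dotProduct, ← pow_add, ← two_mul]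
  exact Fin.sum_univ_eq_sum_range (fun j => a ^ (2 * j)) n

end Matrix

theorem tendsto_sinr_of_tendsto_sqrt_mul {ι : Type*} [Fintype ι] [DecidableEq ι] (E : ℝ)
    (β C : ι → ℝ) (c : ι → ℕ → ℝ) (k : ι)
    (hc : ∀ i, Tendsto (fun M : ℕ => √M * c i M) atTop (𝓝 (C i))) :
    Tendsto (fun M : ℕ => E / √M * ((M : ℝ) - 1) * c k M /
      (E / √M * ∑ i ∈ Finset.univ.erase k, c i M + E / √M * ∑ i, (β i - c i M) + 1))
      atTop (𝓝 (E * C k)) := by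
  have hsqrt : Tendsto (fun M : ℕ => √(M : ℝ)) atTop atTop :=
    Real.tendsto_sqrt_atTop.comp tendsto_natCast_atTop_atTop
  have hpu : Tendsto (fun M : ℕ => E / √M) atTop (𝓝 0) := tendsto_const_nhds.div_atTop hsqrt
  have hc0 : ∀ i, Tendsto (c i) atTop (𝓝 0) := fun i =>
    ((hc i).div_atTop hsqrt).congr' <| by
      filter_upwards [eventually_gt_atTop 0] with M hM
      have : √(M : ℝ) ≠ 0 := by positivity
      field_simp
  have hnum : Tendsto (fun M : ℕ => E / √M * ((M : ℝ) - 1) * c k M) atTop (𝓝 (E * C k)) := by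
    have h := (((tendsto_inv_atTop_zero.comp tendsto_natCast_atTop_atTop).const_sub 1).const_mul
      E).mul (hc k)
    rw [sub_zero, mul_one] at h
    refine h.congr' ?_
    filter_upwards [eventually_gt_atTop 0] with M hM
    have hM' : (0 : ℝ) < M := by exact_mod_cast hM
    simp only [Function.comp_apply]
    field_simp
    rw [Real.sq_sqrt hM'.le]
    ring
  have hden : Tendsto (fun M : ℕ =>
      E / √M * ∑ i ∈ Finset.univ.erase k, c i M + E / √M * ∑ i, (β i - c i M) + 1)
      atTop (𝓝 1) := by
    have h := ((hpu.mul (tendsto_finsetSum (Finset.univ.erase k) fun i _ => hc0 i)).add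
      (hpu.mul (tendsto_finsetSum Finset.univ fun i _ =>
        (tendsto_const_nhds (x := β i)).sub (hc0 i)))).add_const 1
    rwa [zero_mul, zero_mul, add_zero, zero_add] at h
  have h := hnum.div hden one_ne_zero
  rwa [div_one] at h

theorem stmt_7_general (p : ℕ) (α τ Eu : ℝ)
    (hτ : 0 < τ) (hE : 0 < Eu) (K : ℕ)
    (β : Fin K → ℝ) (k : Fin K) :
    Filter.Tendsto (fun M : ℕ =>
      let pu : ℝ := Eu / Real.sqrt M
      let c : Fin K → ℝ := fun i => α ^ 2 * (β i) ^ 2 *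
        ((fun j : Fin (p + 1) => α ^ (j : ℕ)) ⬝ᵥ
          ((β i • (Matrix.of fun a b : Fin (p + 1) => α ^ ((a : ℤ) - (b : ℤ)).natAbs) +
              (Real.sqrt M / (τ * Eu)) • (1 : Matrix (Fin (p + 1)) (Fin (p + 1)) ℝ))⁻¹ *ᵥ
            (fun j : Fin (p + 1) => α ^ (j : ℕ))))
      Real.logb 2 (1 + pu * ((M : ℝ) - 1) * c k /
        (pu * (∑ i ∈ Finset.univ.erase k, c i) + pu * (∑ i, (β i - c i)) + 1)))
      Filter.atTop
      (nhds (Real.logb 2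
        (1 + α ^ 2 * (∑ j ∈ Finset.range (p + 1), α ^ (2 * j)) * τ * Eu ^ 2 * (β k) ^ 2))) := by
  set δ : Fin (p + 1) → ℝ := fun j => α ^ (j : ℕ)
  set Δ := Matrix.of fun a b : Fin (p + 1) => α ^ ((a : ℤ) - (b : ℤ)).natAbs
  have hscale : Tendsto (fun M : ℕ => √M / (τ * Eu)) atTop (cobounded ℝ) :=
    ((Real.tendsto_sqrt_atTop.comp tendsto_natCast_atTop_atTop).atTop_div_const
      (by positivity)).mono_right IsOrderBornology.atTop_le_cobounded
  have hc (i : Fin K) : Tendsto (fun M : ℕ =>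
      √M * (α ^ 2 * β i ^ 2 * (δ ⬝ᵥ ((β i • Δ + (√M / (τ * Eu)) • 1)⁻¹ *ᵥ δ))))
      atTop (𝓝 (τ * Eu * (α ^ 2 * β i ^ 2) * (δ ⬝ᵥ δ))) := by
    refine (((tendsto_mul_dotProduct_inv_add_smul_one_mulVec (β i • Δ) δ).comp hscale).const_mul
      (τ * Eu * (α ^ 2 * β i ^ 2))).congr fun M => ?_
    simp only [Function.comp_apply]
    field_simp
  have hδ : 0 ≤ δ ⬝ᵥ δ := dotProduct_star_self_nonneg δ
  have hlog : ContinuousAt (fun x => Real.logb 2 (1 + x))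
      (Eu * (τ * Eu * (α ^ 2 * β k ^ 2) * (δ ⬝ᵥ δ))) :=
    (Real.continuousAt_logb (by positivity)).comp (continuousAt_const.add continuousAt_id)
  have h := hlog.tendsto.comp (tendsto_sinr_of_tendsto_sqrt_mul Eu β _ _ k hc)
  rwa [dotProduct_self_pow_eq_sum, show ∀ x : ℝ, Eu * (τ * Eu * (α ^ 2 * β k ^ 2) * x) =
    α ^ 2 * x * τ * Eu ^ 2 * β k ^ 2 from fun x => by ring] at h

theorem stmt_7 (p : ℕ) (α τ Eu : ℝ) (hα0 : 0 < α) (hα1 : α ≤ 1)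
    (hτ : 0 < τ) (hE : 0 < Eu) (K : ℕ) (hK : 1 ≤ K)
    (β : Fin K → ℝ) (hβ : ∀ i, 0 < β i) (k : Fin K) :
    Filter.Tendsto (fun M : ℕ =>
      let pu : ℝ := Eu / Real.sqrt M
      let c : Fin K → ℝ := fun i => α ^ 2 * (β i) ^ 2 *
        ((fun j : Fin (p + 1) => α ^ (j : ℕ)) ⬝ᵥ
          ((β i • (Matrix.of fun a b : Fin (p + 1) => α ^ ((a : ℤ) - (b : ℤ)).natAbs) +
              (Real.sqrt M / (τ * Eu)) • (1 : Matrix (Fin (p + 1)) (Fin (p + 1)) ℝ))⁻¹ *ᵥ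
            (fun j : Fin (p + 1) => α ^ (j : ℕ))))
      Real.logb 2 (1 + pu * ((M : ℝ) - 1) * c k /
        (pu * (∑ i ∈ Finset.univ.erase k, c i) + pu * (∑ i, (β i - c i)) + 1)))
      Filter.atTop
      (nhds (Real.logb 2
        (1 + α ^ 2 * (∑ j ∈ Finset.range (p + 1), α ^ (2 * j)) * τ * Eu ^ 2 * (β k) ^ 2))) :=
  stmt_7_general p α τ Eu hτ hE K β k
end

section
/- Let τ > 0, E_u > 0, E_b > 0, κ > 0, α ∈ (0,1], K ≥ 1 an integer, β_1,…,β_K > 0 real, and k ∈ {1,…,K}. For each integer M ≥ 1 set p_p(M) = τ E_u/√M, p_b(M) = E_b/M^κ, and σ_i²(M) = p_p(M) β_i² / (1 + p_p(M) β_i) for i ∈ {1,…,K}, and define R^{dl}(M) = log₂(1 + α² M (σ_k²(M))² / ((β_k + 1/p_b(M)) · Σ_{i=1}^K σ_i²(M))). Then R^{dl}(M) − log₂(1 + α² τ E_u E_b β_k⁴ / (M^{κ−1/2} · Σ_{i=1}^K β_i²)) → 0 as M → ∞. -/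
/-!
In the regime `p_p → 0`, `p_b → 0` the estimate variances behave like `σ_i² ~ p_p β_i²` and
`β_k + 1/p_b ~ 1/p_b`, so the SINR inside the logarithm is asymptotically equivalent to
`α² M p_p p_b β_k⁴ / Σ β_i²`, which for the given power scaling is exactly the second argument.
Finally, `log(1 + x) - log(1 + y) = log(1 + (x - y)/(1 + y)) → 0` whenever `x ~ y` with `y ≥ 0`,
because `|x - y| = o(y)` and `y ≤ 1 + y`, whether or not `y` itself converges.
-/

open Filter Topology Asymptotics Real

theorem tendsto_logb_one_add_sub_logb_one_add {α : Type*} {l : Filter α} {x y : α → ℝ} (b : ℝ)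
    (hxy : x ~[l] y) (hy : ∀ᶠ n in l, 0 ≤ y n) :
    Tendsto (fun n => logb b (1 + x n) - logb b (1 + y n)) l (𝓝 0) := by
  have hx : ∀ᶠ n in l, 0 ≤ x n := hxy.eventually_nonneg hy
  have hy_one_add : y =O[l] fun n => 1 + y n :=
    IsBigO.of_bound 1 <| hy.mono fun n hn => by
      rw [norm_of_nonneg hn, one_mul, norm_of_nonneg (by linarith)]; linarith
  have hratio : Tendsto (fun n => 1 + (x n - y n) / (1 + y n)) l (𝓝 1) := by
    simpa using ((hxy.isLittleO.trans_isBigO hy_one_add).tendsto_div_nhds_zero).const_add 1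
  have hlog : Tendsto (fun n => logb b (1 + (x n - y n) / (1 + y n))) l (𝓝 0) := by
    simpa [Function.comp_def] using (continuousAt_logb (b := b) one_ne_zero).tendsto.comp hratio
  refine hlog.congr' ?_
  filter_upwards [hx, hy] with n hxn hyn
  have : 1 + y n ≠ 0 := by positivity
  rw [← logb_div (by positivity) this]
  congr 1
  field_simp
  ring

theorem isEquivalent_mrt_sinr {ι α : Type*} [Fintype ι] {l : Filter α} {a pp pb : α → ℝ}
    {β : ι → ℝ} {k : ι} (hpp : Tendsto pp l (𝓝 0)) (hpb : Tendsto pb l (𝓝[≠] 0))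
    (hk : β k ≠ 0) (hS : ∑ i, β i ^ 2 ≠ 0) :
    (fun n => a n * (pp n * β k ^ 2 / (1 + pp n * β k)) ^ 2 /
        ((β k + 1 / pb n) * ∑ i, pp n * β i ^ 2 / (1 + pp n * β i)))
      ~[l] fun n => a n * pp n * pb n * β k ^ 4 / ∑ i, β i ^ 2 := by
  have hgain : ∀ i, Tendsto (fun n => β i ^ 2 / (1 + pp n * β i)) l (𝓝 (β i ^ 2)) := fun i => by
    simpa [Pi.div_def] using tendsto_const_nhds.div
      ((tendsto_const_nhds (x := (1 : ℝ))).add (hpp.mul_const (β i))) (by simp)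
  have hσk : (fun n => pp n * β k ^ 2 / (1 + pp n * β k)) ~[l] fun n => pp n * β k ^ 2 := by
    simp_rw [mul_div_assoc]
    exact IsEquivalent.refl.mul ((isEquivalent_const_iff_tendsto (pow_ne_zero 2 hk)).2 (hgain k))
  have hsum : (fun n => ∑ i, pp n * β i ^ 2 / (1 + pp n * β i)) ~[l]
      fun n => pp n * ∑ i, β i ^ 2 := by
    simp_rw [mul_div_assoc, ← Finset.mul_sum]
    exact IsEquivalent.refl.mul
      ((isEquivalent_const_iff_tendsto hS).2 (tendsto_finsetSum _ fun i _ => hgain i))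
  have hpower : (fun n => β k + 1 / pb n) ~[l] fun n => 1 / pb n := by
    refine IsEquivalent.refl.const_add_of_norm_tendsto_atTop ?_
    simpa [Function.comp_def] using tendsto_norm_inv_nhdsNE_zero_atTop.comp hpb
  refine ((IsEquivalent.refl (u := a)).mul (hσk.pow 2) |>.div (hpower.mul hsum)).congr_right
    (Eventually.of_forall fun n => ?_)
  simp only [Pi.mul_apply, Pi.div_apply, Pi.pow_apply]
  rcases eq_or_ne (pp n) 0 with h | h
  · simp [h]
  rcases eq_or_ne (pb n) 0 with h' | h'
  · simp [h']
  field_simp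

theorem stmt_9_general (τ Eu Eb κ α : ℝ) (hτ : 0 < τ) (hEu : 0 < Eu) (hEb : 0 < Eb)
    (hκ : 0 < κ) (K : ℕ)
    (β : Fin K → ℝ) (hβ : ∀ i, 0 < β i) (k : Fin K) :
    Filter.Tendsto (fun M : ℕ =>
      let pp : ℝ := τ * Eu / Real.sqrt M
      let pb : ℝ := Eb / (M : ℝ) ^ κ
      let σ2 : Fin K → ℝ := fun i => pp * (β i) ^ 2 / (1 + pp * β i)
      Real.logb 2 (1 + α ^ 2 * (M : ℝ) * (σ2 k) ^ 2 / ((β k + 1 / pb) * ∑ i, σ2 i)) -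
        Real.logb 2 (1 + α ^ 2 * τ * Eu * Eb * (β k) ^ 4 /
          ((M : ℝ) ^ (κ - 1 / 2) * ∑ i, (β i) ^ 2)))
      Filter.atTop (nhds 0) := by
  have hS : 0 < ∑ i, β i ^ 2 :=
    Finset.sum_pos (fun i _ => pow_pos (hβ i) 2) ⟨k, Finset.mem_univ k⟩
  have hpp : Tendsto (fun M : ℕ => τ * Eu / √M) atTop (𝓝 0) :=
    tendsto_const_nhds.div_atTop <| tendsto_sqrt_atTop.comp tendsto_natCast_atTop_atTop
  have hpb : Tendsto (fun M : ℕ => Eb / (M : ℝ) ^ κ) atTop (𝓝[≠] 0) := by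
    refine tendsto_nhdsWithin_iff.2 ⟨tendsto_const_nhds.div_atTop <|
      (tendsto_rpow_atTop hκ).comp tendsto_natCast_atTop_atTop, ?_⟩
    filter_upwards [eventually_gt_atTop 0] with M hM
    exact (div_pos hEb (rpow_pos_of_pos (Nat.cast_pos.2 hM) κ)).ne'
  refine tendsto_logb_one_add_sub_logb_one_add 2 ?_ (Eventually.of_forall fun M => ?_)
  · refine (isEquivalent_mrt_sinr hpp hpb (hβ k).ne' hS.ne').congr_right ?_
    filter_upwards [eventually_gt_atTop 0] with M hM
    have hM' : (0 : ℝ) < M := Nat.cast_pos.2 hM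
    rw [rpow_sub hM', ← sqrt_eq_rpow]
    field_simp
    rw [sq_sqrt hM'.le]
  · have := hβ k
    positivity

theorem stmt_9 (τ Eu Eb κ α : ℝ) (hτ : 0 < τ) (hEu : 0 < Eu) (hEb : 0 < Eb)
    (hκ : 0 < κ) (hα0 : 0 < α) (hα1 : α ≤ 1) (K : ℕ) (hK : 1 ≤ K)
    (β : Fin K → ℝ) (hβ : ∀ i, 0 < β i) (k : Fin K) :
    Filter.Tendsto (fun M : ℕ =>
      let pp : ℝ := τ * Eu / Real.sqrt M
      let pb : ℝ := Eb / (M : ℝ) ^ κ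
      let σ2 : Fin K → ℝ := fun i => pp * (β i) ^ 2 / (1 + pp * β i)
      Real.logb 2 (1 + α ^ 2 * (M : ℝ) * (σ2 k) ^ 2 / ((β k + 1 / pb) * ∑ i, σ2 i)) -
        Real.logb 2 (1 + α ^ 2 * τ * Eu * Eb * (β k) ^ 4 /
          ((M : ℝ) ^ (κ - 1 / 2) * ∑ i, (β i) ^ 2)))
      Filter.atTop (nhds 0) :=
  stmt_9_general τ Eu Eb κ α hτ hEu hEb hκ K β hβ k
end

section
/- Let C ≥ 2 and K ≥ 1 be integers, b ∈ {1,…,C}, k ∈ {1,…,K}, and let β_{bci} > 0 for all c ∈ {1,…,C}, i ∈ {1,…,K}; let α ∈ (0,1], τ > 0, E_u > 0, and 0 < γ < 1/2. For each integer M ≥ 1 define Q_a(M) = log₂(1 + α² τ E_u² β_{bbk}² M^{1−2γ} / (β_{bbk} E_u M^{−γ} + 1 + (Σ_{(c,i)≠(b,k)} β_{bci}) E_u M^{−γ} + α² τ E_u² (Σ_{c≠b} β_{bck}²) M^{1−2γ})). Then Q_a(M) → log₂(1 + β_{bbk}² / Σ_{c≠b} β_{bck}²) as M → ∞. -/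
/-! The signal and pilot-contamination terms both grow like `M ^ (1 - 2γ)`, while the
interference terms `E_u M^(-γ)` and the noise `1` are of strictly smaller order when `γ < 1/2`.
Dividing numerator and denominator by `M ^ (1 - 2γ)` leaves the ratio of the two leading
coefficients, in which the common factor `α² τ E_u²` cancels. -/

open Filter Topology Asymptotics

theorem isLittleO_rpow_rpow_atTop_of_lt {p q : ℝ} (hpq : p < q) :
    (fun x : ℝ => x ^ p) =o[atTop] fun x => x ^ q := by
  refine (isLittleO_iff_tendsto' ?_).mpr ?_
  · filter_upwards [eventually_gt_atTop 0] with x hx hxq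
    exact absurd hxq (Real.rpow_pos_of_pos hx q).ne'
  · refine (tendsto_rpow_neg_atTop (sub_pos.2 hpq)).congr' ?_
    filter_upwards [eventually_gt_atTop 0] with x hx
    rw [← Real.rpow_sub hx, neg_sub]

theorem tendsto_mul_div_add_mul_of_isLittleO {α 𝕜 : Type*} [NormedField 𝕜] {l : Filter α}
    {f g : α → 𝕜} (N : 𝕜) {D : 𝕜} (hfg : f =o[l] g) (hg : ∀ᶠ x in l, g x ≠ 0) (hD : D ≠ 0) :
    Tendsto (fun x => N * g x / (f x + D * g x)) l (𝓝 (N / D)) := by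
  have hlim : Tendsto (fun x => N / (f x / g x + D)) l (𝓝 (N / (0 + D))) :=
    tendsto_const_nhds.div (hfg.tendsto_div_nhds_zero.add_const D) (by rwa [zero_add])
  rw [zero_add] at hlim
  refine hlim.congr' ?_
  filter_upwards [hg] with x hx
  rw [div_add' _ _ _ hx, div_div_eq_mul_div]

theorem stmt_11_general (C K : ℕ) (hC : 2 ≤ C) (b : Fin C) (k : Fin K)
    (β : Fin C → Fin K → ℝ) (hβ : ∀ c i, 0 < β c i)
    (α τ Eu γ : ℝ) (hα0 : 0 < α) (hτ : 0 < τ) (hE : 0 < Eu)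
    (hγ1 : γ < 1 / 2) :
    Filter.Tendsto (fun M : ℕ =>
      Real.logb 2 (1 + α ^ 2 * τ * Eu ^ 2 * (β b k) ^ 2 * (M : ℝ) ^ (1 - 2 * γ) /
        (β b k * Eu * (M : ℝ) ^ (-γ) + 1 +
          (∑ q ∈ Finset.univ.erase (b, k), β q.1 q.2) * Eu * (M : ℝ) ^ (-γ) +
          α ^ 2 * τ * Eu ^ 2 * (∑ c ∈ Finset.univ.erase b, (β c k) ^ 2) *
            (M : ℝ) ^ (1 - 2 * γ))))
      Filter.atTop
      (nhds (Real.logb 2 (1 + (β b k) ^ 2 / ∑ c ∈ Finset.univ.erase b, (β c k) ^ 2))) := by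
  have hA : 0 < α ^ 2 * τ * Eu ^ 2 := by positivity
  have hS : 0 < ∑ c ∈ Finset.univ.erase b, β c k ^ 2 := by
    refine Finset.sum_pos (fun c _ => pow_pos (hβ c k) 2) ?_
    rw [← Finset.card_pos, Finset.card_erase_of_mem (Finset.mem_univ b), Finset.card_univ,
      Fintype.card_fin]
    omega
  have hM := tendsto_natCast_atTop_atTop (R := ℝ)
  have hinterference := (isLittleO_rpow_rpow_atTop_of_lt
    (show -γ < 1 - 2 * γ by linarith)).comp_tendsto hM
  have hnoise := ((isLittleO_rpow_rpow_atTop_of_lt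
    (show (0 : ℝ) < 1 - 2 * γ by linarith)).comp_tendsto hM).congr_left fun _ => Real.rpow_zero _
  have hpower : ∀ᶠ M : ℕ in atTop, (M : ℝ) ^ (1 - 2 * γ) ≠ 0 := by
    filter_upwards [eventually_gt_atTop 0] with M hM
    exact (Real.rpow_pos_of_pos (Nat.cast_pos.2 hM) _).ne'
  have hSINR := tendsto_mul_div_add_mul_of_isLittleO (α ^ 2 * τ * Eu ^ 2 * β b k ^ 2)
    (((hinterference.const_mul_left (β b k * Eu)).add hnoise).add
      (hinterference.const_mul_left ((∑ q ∈ Finset.univ.erase (b, k), β q.1 q.2) * Eu)))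
    hpower (mul_pos hA hS).ne'
  rw [mul_div_mul_left _ _ hA.ne'] at hSINR
  exact ((Real.continuousAt_logb (by positivity)).comp (by fun_prop)).tendsto.comp hSINR

theorem stmt_11 (C K : ℕ) (hC : 2 ≤ C) (hK : 1 ≤ K) (b : Fin C) (k : Fin K)
    (β : Fin C → Fin K → ℝ) (hβ : ∀ c i, 0 < β c i)
    (α τ Eu γ : ℝ) (hα0 : 0 < α) (hα1 : α ≤ 1) (hτ : 0 < τ) (hE : 0 < Eu)
    (hγ0 : 0 < γ) (hγ1 : γ < 1 / 2) :
    Filter.Tendsto (fun M : ℕ =>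
      Real.logb 2 (1 + α ^ 2 * τ * Eu ^ 2 * (β b k) ^ 2 * (M : ℝ) ^ (1 - 2 * γ) /
        (β b k * Eu * (M : ℝ) ^ (-γ) + 1 +
          (∑ q ∈ Finset.univ.erase (b, k), β q.1 q.2) * Eu * (M : ℝ) ^ (-γ) +
          α ^ 2 * τ * Eu ^ 2 * (∑ c ∈ Finset.univ.erase b, (β c k) ^ 2) *
            (M : ℝ) ^ (1 - 2 * γ))))
      Filter.atTop
      (nhds (Real.logb 2 (1 + (β b k) ^ 2 / ∑ c ∈ Finset.univ.erase b, (β c k) ^ 2))) :=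
  stmt_11_general C K hC b k β hβ α τ Eu γ hα0 hτ hE hγ1
end

section
/- Let C ≥ 2 and K ≥ 1 be integers, b ∈ {1,…,C}, k ∈ {1,…,K}, and let β_{bci} > 0 for all c ∈ {1,…,C}, i ∈ {1,…,K}; let p ∈ ℕ, α ∈ (0,1], τ > 0, E_u > 0, 0 < γ < 1/2, and set s = Σ_{j=0}^p α^{2j}. For each integer M ≥ 1 define Q_p(M) = log₂(1 + α² s τ E_u² β_{bbk}² M^{1−2γ} / (β_{bbk} E_u M^{−γ} + 1 + (Σ_{(c,i)≠(b,k)} β_{bci}) E_u M^{−γ} + α² s α^{2p} τ E_u² (Σ_{c≠b} β_{bck}²) M^{1−2γ})). Then Q_p(M) → log₂(1 + β_{bbk}² / (α^{2p} · Σ_{c≠b} β_{bck}²)) as M → ∞. -/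
/-! With `t = M^(1-2γ)`, the argument of the logarithm is `1 + A t / (e + B t)`, where `A t` is the
desired-signal term, `B t` the pilot-contamination term and `e` collects noise and interference.
Since `γ < 1/2`, both `M^(-γ)` and `1` are `o(t)`, so `e / t → 0` and the SINR tends to
`A / B`; the common factor `α² s τ E_u²` of `A` and `B` cancels. -/

open Filter Topology

theorem Filter.Tendsto.mul_div_add_mul {ι : Type*} {l : Filter ι} {t e : ι → ℝ} {B : ℝ}
    (A : ℝ) (he : Tendsto (fun i => e i / t i) l (𝓝 0)) (ht : ∀ᶠ i in l, t i ≠ 0)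
    (hB : B ≠ 0) : Tendsto (fun i => A * t i / (e i + B * t i)) l (𝓝 (A / B)) := by
  have hlim : Tendsto (fun i => A / (e i / t i + B)) l (𝓝 (A / B)) := by
    have h := (tendsto_const_nhds (x := A)).div (he.add_const B) (by rwa [zero_add])
    rw [zero_add] at h
    exact h
  refine hlim.congr' ?_
  filter_upwards [ht] with i hti
  rw [div_add' _ _ _ hti, div_div_eq_mul_div]

theorem tendsto_natCast_rpow_div_rpow_atTop {a b : ℝ} (hab : a < b) :
    Tendsto (fun n : ℕ => (n : ℝ) ^ a / (n : ℝ) ^ b) atTop (𝓝 0) := by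
  have hlim := (tendsto_rpow_neg_atTop (sub_pos.mpr hab)).comp tendsto_natCast_atTop_atTop
  refine hlim.congr' ?_
  filter_upwards [eventually_gt_atTop 0] with n hn
  rw [Function.comp_apply, ← Real.rpow_sub (Nat.cast_pos.mpr hn), neg_sub]

theorem stmt_14_general (C K : ℕ) (hC : 2 ≤ C) (b : Fin C) (k : Fin K)
    (β : Fin C → Fin K → ℝ) (hβ : ∀ c i, 0 < β c i)
    (p : ℕ) (α τ Eu γ : ℝ) (hα0 : 0 < α) (hτ : 0 < τ) (hE : 0 < Eu)
    (hγ1 : γ < 1 / 2)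
    (s : ℝ) (hs : s = ∑ j ∈ Finset.range (p + 1), α ^ (2 * j)) :
    Filter.Tendsto (fun M : ℕ =>
      Real.logb 2 (1 + α ^ 2 * s * τ * Eu ^ 2 * (β b k) ^ 2 * (M : ℝ) ^ (1 - 2 * γ) /
        (β b k * Eu * (M : ℝ) ^ (-γ) + 1 +
          (∑ q ∈ Finset.univ.erase (b, k), β q.1 q.2) * Eu * (M : ℝ) ^ (-γ) +
          α ^ 2 * s * α ^ (2 * p) * τ * Eu ^ 2 *
            (∑ c ∈ Finset.univ.erase b, (β c k) ^ 2) * (M : ℝ) ^ (1 - 2 * γ))))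
      Filter.atTop
      (nhds (Real.logb 2 (1 + (β b k) ^ 2 /
        (α ^ (2 * p) * ∑ c ∈ Finset.univ.erase b, (β c k) ^ 2)))) := by
  set S := ∑ c ∈ Finset.univ.erase b, (β c k) ^ 2
  have hs0 : 0 < s := hs ▸ by positivity
  have hS : 0 < S := by
    obtain ⟨c, hc⟩ := Fintype.exists_ne_of_one_lt_card (by rw [Fintype.card_fin]; omega) b
    exact Finset.sum_pos (fun c _ => pow_pos (hβ c k) 2) ⟨c, by simpa using hc⟩
  have hsub : Tendsto (fun M : ℕ => (M : ℝ) ^ (-γ) / (M : ℝ) ^ (1 - 2 * γ)) atTop (𝓝 0) :=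
    tendsto_natCast_rpow_div_rpow_atTop (by linarith)
  have hone : Tendsto (fun M : ℕ => 1 / (M : ℝ) ^ (1 - 2 * γ)) atTop (𝓝 0) := by
    simpa using tendsto_natCast_rpow_div_rpow_atTop (a := 0) (by linarith)
  have he := ((hsub.const_mul (β b k * Eu)).add hone).add
    (hsub.const_mul ((∑ q ∈ Finset.univ.erase (b, k), β q.1 q.2) * Eu))
  simp only [mul_zero, add_zero, ← mul_div_assoc, ← add_div] at he
  have ht : ∀ᶠ M : ℕ in atTop, (M : ℝ) ^ (1 - 2 * γ) ≠ 0 := by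
    filter_upwards [eventually_gt_atTop 0] with M hM
    exact (Real.rpow_pos_of_pos (Nat.cast_pos.mpr hM) _).ne'
  have hsinr := he.mul_div_add_mul (α ^ 2 * s * τ * Eu ^ 2 * (β b k) ^ 2) ht
    (B := α ^ 2 * s * α ^ (2 * p) * τ * Eu ^ 2 * S) (by positivity)
  have hratio : α ^ 2 * s * τ * Eu ^ 2 * (β b k) ^ 2 / (α ^ 2 * s * α ^ (2 * p) * τ * Eu ^ 2 * S)
      = (β b k) ^ 2 / (α ^ (2 * p) * S) := by
    field_simp
  rw [hratio] at hsinr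
  exact (hsinr.const_add 1).logb (by positivity)

theorem stmt_14 (C K : ℕ) (hC : 2 ≤ C) (hK : 1 ≤ K) (b : Fin C) (k : Fin K)
    (β : Fin C → Fin K → ℝ) (hβ : ∀ c i, 0 < β c i)
    (p : ℕ) (α τ Eu γ : ℝ) (hα0 : 0 < α) (hα1 : α ≤ 1) (hτ : 0 < τ) (hE : 0 < Eu)
    (hγ0 : 0 < γ) (hγ1 : γ < 1 / 2)
    (s : ℝ) (hs : s = ∑ j ∈ Finset.range (p + 1), α ^ (2 * j)) :
    Filter.Tendsto (fun M : ℕ =>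
      Real.logb 2 (1 + α ^ 2 * s * τ * Eu ^ 2 * (β b k) ^ 2 * (M : ℝ) ^ (1 - 2 * γ) /
        (β b k * Eu * (M : ℝ) ^ (-γ) + 1 +
          (∑ q ∈ Finset.univ.erase (b, k), β q.1 q.2) * Eu * (M : ℝ) ^ (-γ) +
          α ^ 2 * s * α ^ (2 * p) * τ * Eu ^ 2 *
            (∑ c ∈ Finset.univ.erase b, (β c k) ^ 2) * (M : ℝ) ^ (1 - 2 * γ))))
      Filter.atTop
      (nhds (Real.logb 2 (1 + (β b k) ^ 2 /
        (α ^ (2 * p) * ∑ c ∈ Finset.univ.erase b, (β c k) ^ 2)))) :=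
  stmt_14_general C K hC b k β hβ p α τ Eu γ hα0 hτ hE hγ1 s hs
end

section
/- Let C ≥ 1 and K ≥ 1 be integers, b ∈ {1,…,C}, k ∈ {1,…,K}, and let β_{bci} > 0 for all c ∈ {1,…,C}, i ∈ {1,…,K}; let p ∈ ℕ, α ∈ (0,1], τ > 0, E_u > 0, γ > 1/2, and set s = Σ_{j=0}^p α^{2j}. For each integer M ≥ 1 define Q_p(M) = log₂(1 + α² s τ E_u² β_{bbk}² M^{1−2γ} / (β_{bbk} E_u M^{−γ} + 1 + (Σ_{(c,i)≠(b,k)} β_{bci}) E_u M^{−γ} + α² s α^{2p} τ E_u² (Σ_{c≠b} β_{bck}²) M^{1−2γ})). Then Q_p(M) → 0 as M → ∞. -/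
/-! Both powers `M ^ (-γ)` and `M ^ (1 - 2γ)` tend to `0` once `γ > 1/2`, so the SINR inside the
logarithm tends to `0 / 1` and the rate to `logb 2 1 = 0`. -/

open Filter Topology

theorem tendsto_natCast_rpow_atTop_nhds_zero {r : ℝ} (hr : r < 0) :
    Tendsto (fun M : ℕ => (M : ℝ) ^ r) atTop (𝓝 0) := by
  have h := (tendsto_rpow_neg_atTop (neg_pos.mpr hr)).comp tendsto_natCast_atTop_atTop
  rwa [neg_neg] at h

theorem Filter.Tendsto.logb_one_add_div {ι : Type*} {l : Filter ι} {N D : ι → ℝ} {d : ℝ}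
    (hN : Tendsto N l (𝓝 0)) (hD : Tendsto D l (𝓝 d)) (hd : d ≠ 0) (b : ℝ) :
    Tendsto (fun i => Real.logb b (1 + N i / D i)) l (𝓝 0) := by
  have hratio : Tendsto (fun i => 1 + N i / D i) l (𝓝 1) := by
    simpa using (hN.div hD hd).const_add 1
  simpa using hratio.logb one_ne_zero

theorem stmt_15_general (C K : ℕ) (b : Fin C) (k : Fin K)
    (β : Fin C → Fin K → ℝ)
    (p : ℕ) (α τ Eu γ : ℝ)
    (hγ : 1 / 2 < γ) (s : ℝ) :
    Filter.Tendsto (fun M : ℕ =>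
      Real.logb 2 (1 + α ^ 2 * s * τ * Eu ^ 2 * (β b k) ^ 2 * (M : ℝ) ^ (1 - 2 * γ) /
        (β b k * Eu * (M : ℝ) ^ (-γ) + 1 +
          (∑ q ∈ Finset.univ.erase (b, k), β q.1 q.2) * Eu * (M : ℝ) ^ (-γ) +
          α ^ 2 * s * α ^ (2 * p) * τ * Eu ^ 2 *
            (∑ c ∈ Finset.univ.erase b, (β c k) ^ 2) * (M : ℝ) ^ (1 - 2 * γ))))
      Filter.atTop (nhds 0) := by
  have hpow : Tendsto (fun M : ℕ => (M : ℝ) ^ (-γ)) atTop (𝓝 0) :=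
    tendsto_natCast_rpow_atTop_nhds_zero (by linarith)
  have hpow' : Tendsto (fun M : ℕ => (M : ℝ) ^ (1 - 2 * γ)) atTop (𝓝 0) :=
    tendsto_natCast_rpow_atTop_nhds_zero (by linarith)
  have hsignal := hpow'.const_mul (α ^ 2 * s * τ * Eu ^ 2 * (β b k) ^ 2)
  have hdenom := (((hpow.const_mul (β b k * Eu)).add_const 1).add
    (hpow.const_mul ((∑ q ∈ Finset.univ.erase (b, k), β q.1 q.2) * Eu))).add
    (hpow'.const_mul
      (α ^ 2 * s * α ^ (2 * p) * τ * Eu ^ 2 * ∑ c ∈ Finset.univ.erase b, (β c k) ^ 2))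
  simp only [mul_zero, zero_add, add_zero] at hsignal hdenom
  exact hsignal.logb_one_add_div hdenom one_ne_zero 2

theorem stmt_15 (C K : ℕ) (hC : 1 ≤ C) (hK : 1 ≤ K) (b : Fin C) (k : Fin K)
    (β : Fin C → Fin K → ℝ) (hβ : ∀ c i, 0 < β c i)
    (p : ℕ) (α τ Eu γ : ℝ) (hα0 : 0 < α) (hα1 : α ≤ 1) (hτ : 0 < τ) (hE : 0 < Eu)
    (hγ : 1 / 2 < γ) (s : ℝ) (hs : s = ∑ j ∈ Finset.range (p + 1), α ^ (2 * j)) :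
    Filter.Tendsto (fun M : ℕ =>
      Real.logb 2 (1 + α ^ 2 * s * τ * Eu ^ 2 * (β b k) ^ 2 * (M : ℝ) ^ (1 - 2 * γ) /
        (β b k * Eu * (M : ℝ) ^ (-γ) + 1 +
          (∑ q ∈ Finset.univ.erase (b, k), β q.1 q.2) * Eu * (M : ℝ) ^ (-γ) +
          α ^ 2 * s * α ^ (2 * p) * τ * Eu ^ 2 *
            (∑ c ∈ Finset.univ.erase b, (β c k) ^ 2) * (M : ℝ) ^ (1 - 2 * γ))))
      Filter.atTop (nhds 0) :=
  stmt_15_general C K b k β p α τ Eu γ hγ s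
end
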